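/- For t > 0, the improper integral ∫_{-∞}^{∞} e^{i t x²} dx converges and equals √(π/t)·e^{iπ/4}. -/

import Mathlib

/-!
For `re b > 0` the Gaussian integral `∫ cexp (-b x²) = (π / b) ^ (1/2)` is known. Integrating by
parts against `d/dx cexp (-b x²) = -2 b x cexp (-b x²)` bounds every tail `∫_R^S cexp (-b x²)` by
`1 / (‖b‖ R)`, uniformly on the closed half-plane `re b ≥ 0`. Letting `b + ε → b` as `ε → 0⁺`
carries the estimate `‖∫_{-R}^R cexp (-b x²) - (π / b) ^ (1/2)‖ ≤ 2 / (‖b‖ R)` to the imaginary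
axis, and `b = -t i` gives the Fresnel integral.
-/

open Filter Real Complex MeasureTheory intervalIntegral Set Topology

theorem norm_cexp_neg_mul_sq_le_one {b : ℂ} (hb : 0 ≤ b.re) (x : ℝ) :
    ‖cexp (-b * x ^ 2)‖ ≤ 1 := by
  rw [norm_cexp_neg_mul_sq, Real.exp_le_one_iff, neg_mul, neg_nonpos]
  positivity

theorem hasDerivAt_cexp_neg_mul_sq_div {b : ℂ} (hb : b ≠ 0) {x : ℝ} (hx : x ≠ 0) :
    HasDerivAt (fun x : ℝ => cexp (-b * x ^ 2) / (-2 * b * x))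
      (cexp (-b * x ^ 2) + cexp (-b * x ^ 2) / (2 * b * x ^ 2)) x := by
  have hx' : (x : ℂ) ≠ 0 := ofReal_ne_zero.mpr hx
  have hexp : HasDerivAt (fun z : ℂ => cexp (-b * z ^ 2)) (cexp (-b * x ^ 2) * (-b * (2 * x)))
      (x : ℂ) := by
    simpa using ((hasDerivAt_pow 2 (x : ℂ)).const_mul (-b)).cexp
  have hlin : HasDerivAt (fun z : ℂ => -2 * b * z) (-2 * b) (x : ℂ) := by
    simpa using (hasDerivAt_id (x : ℂ)).const_mul (-2 * b)
  refine ((hexp.div hlin (by simp [hb, hx'])).comp_ofReal).congr_deriv ?_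
  field_simp
  ring

theorem intervalIntegral_cexp_neg_mul_sq_sub (b : ℂ) (R S : ℝ) :
    (∫ x in -S..S, cexp (-b * x ^ 2)) - ∫ x in -R..R, cexp (-b * x ^ 2) =
      2 * ∫ x in R..S, cexp (-b * x ^ 2) := by
  have hint : ∀ u v : ℝ, IntervalIntegrable (fun x : ℝ => cexp (-b * x ^ 2)) volume u v :=
    fun u v => by apply Continuous.intervalIntegrable; fun_prop
  have heven : ∫ x in -S..-R, cexp (-b * x ^ 2) = ∫ x in R..S, cexp (-b * x ^ 2) := by
    rw [← integral_comp_neg]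
    simp only [ofReal_neg, neg_sq]
  rw [← integral_add_adjacent_intervals (hint (-S) (-R)) (hint (-R) S),
    ← integral_add_adjacent_intervals (hint (-R) R) (hint R S), heven]
  ring

theorem norm_integral_cexp_neg_mul_sq_le {b : ℂ} (hb0 : b ≠ 0) (hb : 0 ≤ b.re) {R S : ℝ}
    (hR : 0 < R) (hRS : R ≤ S) :
    ‖∫ x in R..S, cexp (-b * x ^ 2)‖ ≤ 1 / (‖b‖ * R) := by
  set G : ℝ → ℂ := fun x => cexp (-b * x ^ 2) / (-2 * b * x)
  have hpos : ∀ x ∈ uIcc R S, 0 < x := fun x hx =>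
    hR.trans_le (uIcc_of_le hRS ▸ hx).1
  have hexp_int : IntervalIntegrable (fun x : ℝ => cexp (-b * x ^ 2)) volume R S := by
    apply Continuous.intervalIntegrable; fun_prop
  have hcorr_int :
      IntervalIntegrable (fun x : ℝ => cexp (-b * x ^ 2) / (2 * b * x ^ 2)) volume R S := by
    refine ContinuousOn.intervalIntegrable (ContinuousOn.div (by fun_prop) (by fun_prop) ?_)
    intro x hx
    simp [hb0, (hpos x hx).ne']
  have hparts : ∫ x in R..S, cexp (-b * x ^ 2) =
      G S - G R - ∫ x in R..S, cexp (-b * x ^ 2) / (2 * b * x ^ 2) := by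
    rw [← integral_eq_sub_of_hasDerivAt
      (fun x hx => hasDerivAt_cexp_neg_mul_sq_div hb0 (hpos x hx).ne') (hexp_int.add hcorr_int),
      integral_add hexp_int hcorr_int]
    ring
  have hG : ∀ x, 0 < x → ‖G x‖ ≤ 1 / (2 * ‖b‖ * x) := by
    intro x hx
    have hden : ‖-2 * b * (x : ℂ)‖ = 2 * ‖b‖ * x := by simp [abs_of_pos hx]
    rw [norm_div, hden]
    gcongr
    exact norm_cexp_neg_mul_sq_le_one hb x
  have hcorr : ‖∫ x in R..S, cexp (-b * x ^ 2) / (2 * b * x ^ 2)‖ ≤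
      (1 / R - 1 / S) / (2 * ‖b‖) := by
    have hzero : (0 : ℝ) ∉ uIcc R S := fun h => (hpos 0 h).false
    calc _ ≤ ∫ x in R..S, (2 * ‖b‖)⁻¹ * x ^ (-2 : ℤ) := by
          refine norm_integral_le_of_norm_le hRS (ae_of_all _ fun x hx => ?_) ?_
          · have hx : 0 < x := hR.trans hx.1
            have hden : ‖2 * b * (x : ℂ) ^ 2‖ = 2 * ‖b‖ * x ^ 2 := by simp
            rw [norm_div, hden, zpow_neg, zpow_ofNat, ← mul_inv, ← one_div]
            gcongr
            exact norm_cexp_neg_mul_sq_le_one hb x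
          · exact (intervalIntegrable_zpow (Or.inr hzero)).const_mul _
      _ = (1 / R - 1 / S) / (2 * ‖b‖) := by
          rw [intervalIntegral.integral_const_mul, integral_zpow (Or.inr ⟨by norm_num, hzero⟩)]
          norm_num
          field_simp
          ring
  have hb' : 0 < ‖b‖ := norm_pos_iff.mpr hb0
  calc ‖∫ x in R..S, cexp (-b * x ^ 2)‖
      ≤ ‖G S‖ + ‖G R‖ + ‖∫ x in R..S, cexp (-b * x ^ 2) / (2 * b * x ^ 2)‖ := by
        rw [hparts]
        exact (norm_sub_le _ _).trans (add_le_add_left (norm_sub_le _ _) _)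
    _ ≤ 1 / (2 * ‖b‖ * S) + 1 / (2 * ‖b‖ * R) + (1 / R - 1 / S) / (2 * ‖b‖) :=
        add_le_add_three (hG S (hR.trans_le hRS)) (hG R hR) hcorr
    _ = 1 / (‖b‖ * R) := by
        field_simp
        ring

theorem norm_intervalIntegral_cexp_neg_mul_sq_sub_le {b : ℂ} (hb : 0 < b.re) {R : ℝ}
    (hR : 0 < R) :
    ‖(∫ x in -R..R, cexp (-b * x ^ 2)) - (π / b) ^ (1 / 2 : ℂ)‖ ≤ 2 / (‖b‖ * R) := by
  have hb0 : b ≠ 0 := fun h => by simp [h] at hb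
  have hlim : Tendsto
      (fun S => (∫ x in -S..S, cexp (-b * x ^ 2)) - ∫ x in -R..R, cexp (-b * x ^ 2)) atTop
      (𝓝 ((π / b) ^ (1 / 2 : ℂ) - ∫ x in -R..R, cexp (-b * x ^ 2))) := by
    rw [← integral_gaussian_complex hb]
    exact (intervalIntegral_tendsto_integral (integrable_cexp_neg_mul_sq hb)
      tendsto_neg_atTop_atBot tendsto_id).sub_const _
  rw [norm_sub_rev]
  refine le_of_tendsto hlim.norm ?_
  filter_upwards [eventually_ge_atTop R] with S hS
  rw [intervalIntegral_cexp_neg_mul_sq_sub, norm_mul, Complex.norm_two,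
    ← mul_one_div 2 (‖b‖ * R)]
  gcongr
  exact norm_integral_cexp_neg_mul_sq_le hb0 hb.le hR hS

theorem norm_intervalIntegral_cexp_neg_mul_sq_sub_le_of_re_nonneg {b : ℂ} (hb0 : b ≠ 0)
    (hb : 0 ≤ b.re) {R : ℝ} (hR : 0 < R) :
    ‖(∫ x in -R..R, cexp (-b * x ^ 2)) - (π / b) ^ (1 / 2 : ℂ)‖ ≤ 2 / (‖b‖ * R) := by
  have hcpow : ContinuousAt (fun z : ℂ => z ^ (1 / 2 : ℂ)) (π / b) := by
    refine continuousAt_cpow_const_of_re_pos (Or.inl ?_) (by norm_num)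
    simp only [div_re, ofReal_re, ofReal_im, zero_mul, zero_div, add_zero]
    exact div_nonneg (mul_nonneg pi_pos.le hb) (normSq_nonneg b)
  have hlhs : ContinuousAt (fun ε : ℝ =>
      ‖(∫ x in -R..R, cexp (-(b + ε) * x ^ 2)) - (π / (b + ε)) ^ (1 / 2 : ℂ)‖) 0 := by
    have hint : Continuous fun ε : ℝ => ∫ x in -R..R, cexp (-(b + ε) * x ^ 2) :=
      continuous_parametric_intervalIntegral_of_continuous' (by fun_prop) _ _
    have hdiv : ContinuousAt (fun ε : ℝ => π / (b + ε)) 0 :=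
      continuousAt_const.div (by fun_prop) (by simpa using hb0)
    exact (hint.continuousAt.sub (hcpow.comp_of_eq hdiv (by simp))).norm
  have hrhs : ContinuousAt (fun ε : ℝ => 2 / (‖b + ε‖ * R)) 0 :=
    continuousAt_const.div (by fun_prop) (by simp [hb0, hR.ne'])
  have hperturbed : ∀ᶠ ε : ℝ in 𝓝[>] 0,
      ‖(∫ x in -R..R, cexp (-(b + ε) * x ^ 2)) - (π / (b + ε)) ^ (1 / 2 : ℂ)‖ ≤
        2 / (‖b + ε‖ * R) := by
    filter_upwards [self_mem_nhdsWithin] with ε (hε : 0 < ε)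
    have hre : 0 < (b + ε).re := by simp only [add_re, ofReal_re]; linarith
    exact norm_intervalIntegral_cexp_neg_mul_sq_sub_le hre hR
  simpa using le_of_tendsto_of_tendsto (hlhs.tendsto.mono_left nhdsWithin_le_nhds)
    (hrhs.tendsto.mono_left nhdsWithin_le_nhds) hperturbed

theorem tendsto_intervalIntegral_cexp_neg_mul_sq {b : ℂ} (hb0 : b ≠ 0) (hb : 0 ≤ b.re) :
    Tendsto (fun R : ℝ => ∫ x in -R..R, cexp (-b * x ^ 2)) atTop (𝓝 ((π / b) ^ (1 / 2 : ℂ))) := by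
  rw [tendsto_iff_norm_sub_tendsto_zero]
  have hbound : Tendsto (fun R : ℝ => 2 / (‖b‖ * R)) atTop (𝓝 0) :=
    tendsto_const_nhds.div_atTop (tendsto_id.const_mul_atTop (norm_pos_iff.mpr hb0))
  refine squeeze_zero' (Eventually.of_forall fun _ => norm_nonneg _) ?_ hbound
  filter_upwards [eventually_gt_atTop 0] with R hR
  exact norm_intervalIntegral_cexp_neg_mul_sq_sub_le_of_re_nonneg hb0 hb hR

theorem cpow_half_pi_div_neg_mul_I {t : ℝ} (ht : 0 < t) :
    (π / -(t * I)) ^ (1 / 2 : ℂ) = (√(π / t) : ℂ) * cexp ((π / 4 : ℝ) * I) := by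
  have hπt : 0 < π / t := div_pos pi_pos ht
  have hrot : (π : ℂ) / -(t * I) = (π / t : ℝ) * I := by
    have ht' : (t : ℂ) ≠ 0 := ofReal_ne_zero.mpr ht.ne'
    rw [div_eq_iff (by simp [ht']), ofReal_div]
    field_simp
    linear_combination I_sq
  rw [hrot, cpow_def_of_ne_zero (by simp [ht.ne']), log_ofReal_mul hπt I_ne_zero, log_I,
    Real.sqrt_eq_rpow, rpow_def_of_pos hπt, ofReal_exp, ← Complex.exp_add]
  push_cast
  ring_nf

theorem stmt14 (t : ℝ) (ht : 0 < t) :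
    Tendsto (fun R : ℝ => ∫ x in (-R)..R, Complex.exp (((t * x ^ 2 : ℝ) : ℂ) * Complex.I))
      atTop (nhds ((Real.sqrt (π / t) : ℂ) * Complex.exp (((π / 4 : ℝ) : ℂ) * Complex.I))) := by
  have hb0 : -((t : ℂ) * I) ≠ 0 := by simp [ht.ne']
  have hlim := tendsto_intervalIntegral_cexp_neg_mul_sq hb0 (by simp)
  rw [cpow_half_pi_div_neg_mul_I ht] at hlim
  convert hlim using 4 with R x
  push_cast
  ring_nf
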